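/- Let α>0, p∈(0,1), n≥1 an integer, and ε∈(0,1) with ε ≤ 1/n. Then for every set partition 𝒜 of {1,…,n}, Pr_{0,n}(𝒜) ≤ (1 + αnε/(α+1-αεn)) · Pr_{ε,n}(𝒜). -/

import Mathlib

open MeasureTheory

/-- The Beta function `B(a,b) = ∫_0^1 x^(a-1) (1-x)^(b-1) dx`. -/
noncomputable def betaFun (a b : ℝ) : ℝ :=
  ∫ x in (0:ℝ)..1, x ^ (a - 1) * (1 - x) ^ (b - 1)

/-- The regularized incomplete Beta function
`I_ε(a,b) = (1/B(a,b)) ∫_0^ε x^(a-1) (1-x)^(b-1) dx`. -/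
noncomputable def incBeta (ε a b : ℝ) : ℝ :=
  (∫ x in (0:ℝ)..ε, x ^ (a - 1) * (1 - x) ^ (b - 1)) / betaFun a b

/-- `P` is a set partition of `{1,…,n}` (modelled as `Fin n`): the blocks are non-empty and
every point lies in exactly one block. -/
def IsSetPartition (n : ℕ) (P : Finset (Finset (Fin n))) : Prop :=
  (∅ ∉ P) ∧ ∀ i : Fin n, ∃! A : Finset (Fin n), A ∈ P ∧ i ∈ A

/-- The type of set partitions of `{1,…,n}`. -/
def SetPartition (n : ℕ) := {P : Finset (Finset (Fin n)) // IsSetPartition n P}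

noncomputable instance (n : ℕ) : Fintype (SetPartition n) := by
  unfold SetPartition; exact Fintype.ofFinite _

/-- An enumeration of the blocks of a finite family of blocks by `Fin t`, `t` the number of
blocks. -/
noncomputable def blockEnum {n : ℕ} (P : Finset (Finset (Fin n))) :
    Fin P.card → Finset (Fin n) :=
  fun j => ((Fintype.equivFinOfCardEq (Fintype.card_coe P)).symm j : Finset (Fin n))

/-- The sizes `n_1, …, n_t` of the blocks of a set partition `P` with `t = P.1.card` blocks. -/
noncomputable def blockSize {n : ℕ} (P : SetPartition n) : Fin P.1.card → ℕ :=
  fun j => (blockEnum P.1 j).card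

/-- The exchangeable partition probability function of the quasi-Bernoulli stick-breaking
process with parameters `α`, `p`, `ε ∈ (0,1)`, evaluated on a partition of `n` points into `t`
blocks of sizes `ns 1, …, ns t`:
`(α^t Γ(α)/Γ(n+α)) (∏_j n_j!) Σ_{σ∈S_t} ∏_j [p+(1-p) I_ε(g_{j+1}(σ)+α, n_{σ_j}+1)/ε^α]
  / [g_j(σ)+α(1-p)(1-ε^{g_j(σ)})]` where `g_j(σ) = Σ_{l=j}^t n_{σ_l}`. -/
noncomputable def eppfEps (α p ε : ℝ) (n t : ℕ) (ns : Fin t → ℕ) : ℝ :=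
  α ^ t * Real.Gamma α / Real.Gamma ((n : ℝ) + α) *
    (∏ j, (Nat.factorial (ns j) : ℝ)) *
    ∑ σ : Equiv.Perm (Fin t), ∏ j,
      (p + (1 - p) *
          incBeta ε (((∑ l ∈ Finset.Ioi j, ns (σ l) : ℕ) : ℝ) + α) ((ns (σ j) : ℝ) + 1)
          / ε ^ α) /
      (((∑ l ∈ Finset.Ici j, ns (σ l) : ℕ) : ℝ) +
        α * (1 - p) * (1 - ε ^ (∑ l ∈ Finset.Ici j, ns (σ l))))

/-- The exchangeable partition probability function of the quasi-Bernoulli stick-breaking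
process with `ε = 0` (a finite stick-breaking model with `Geometric(1-p)` number of
components and `Beta(1,α)` proportions):
`(α^t Γ(α)/Γ(n+α)) (∏_j n_j!) Σ_{σ∈S_t} ∏_j [p + 𝟙(j=t)(1-p)/(α B(α, n_{σ_t}+1))]
  / [g_j(σ)+α(1-p)]` where `g_j(σ) = Σ_{l=j}^t n_{σ_l}`. -/
noncomputable def eppfZero (α p : ℝ) (n t : ℕ) (ns : Fin t → ℕ) : ℝ :=
  α ^ t * Real.Gamma α / Real.Gamma ((n : ℝ) + α) *
    (∏ j, (Nat.factorial (ns j) : ℝ)) *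
    ∑ σ : Equiv.Perm (Fin t), ∏ j : Fin t,
      (p + (if j.val = t - 1 then
              (1 - p) / (α * betaFun α ((ns (σ j) : ℝ) + 1)) else 0)) /
      (((∑ l ∈ Finset.Ici j, ns (σ l) : ℕ) : ℝ) + α * (1 - p))

/-- `Pr_{ε,n}(𝒜)` for a set partition `𝒜` of `{1,…,n}` and `ε ∈ (0,1)`. -/
noncomputable def PrEps (α p ε : ℝ) (n : ℕ) (P : SetPartition n) : ℝ :=
  eppfEps α p ε n P.1.card (blockSize P)

/-- `Pr_{0,n}(𝒜)` for a set partition `𝒜` of `{1,…,n}`. -/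
noncomputable def PrZero (α p : ℝ) (n : ℕ) (P : SetPartition n) : ℝ :=
  eppfZero α p n P.1.card (blockSize P)

/-!
Both formulas are compared summand by summand in `σ` and factor by factor in `j`. For `j < t`
the `ε`-factor has the larger numerator (a nonnegative incomplete Beta term is added to `p`) and
the smaller denominator (`1 - ε ^ g_j ≤ 1`). Only the last factor costs something: integrating
Bernoulli's inequality `1 - m x ≤ (1 - x) ^ m` against `x ^ (α - 1)` over `[0, ε]` gives
`I_ε(α, m + 1) / ε ^ α ≥ (1 - α m ε / (α + 1)) / (α B(α, m + 1))`, and the constant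
`1 + α n ε / (α + 1 - α ε n) = (1 - α n ε / (α + 1))⁻¹` absorbs the loss for every block size
`m ≤ n`.
-/

open Finset

section BetaIntegral

variable {a : ℝ}

lemma intervalIntegrable_rpow_sub_one_mul_one_sub_pow (ha : 0 < a) (m : ℕ) (c : ℝ) :
    IntervalIntegrable (fun x : ℝ => x ^ (a - 1) * (1 - x) ^ m) volume 0 c :=
  (intervalIntegral.intervalIntegrable_rpow' (by linarith)).mul_continuousOn (by fun_prop)

lemma integral_beta_kernel_natCast_add_one (a c : ℝ) (m : ℕ) :
    ∫ x in (0:ℝ)..c, x ^ (a - 1) * (1 - x) ^ ((m : ℝ) + 1 - 1) =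
      ∫ x in (0:ℝ)..c, x ^ (a - 1) * (1 - x) ^ m := by
  simp only [add_sub_cancel_right, Real.rpow_natCast]

lemma betaFun_natCast_add_one_pos (ha : 0 < a) (m : ℕ) : 0 < betaFun a ((m : ℝ) + 1) := by
  rw [betaFun, integral_beta_kernel_natCast_add_one]
  refine intervalIntegral.intervalIntegral_pos_of_pos_on
    (intervalIntegrable_rpow_sub_one_mul_one_sub_pow ha m 1) (fun x hx => ?_) one_pos
  exact mul_pos (Real.rpow_pos_of_pos hx.1 _) (pow_pos (by linarith [hx.2]) _)

lemma integral_beta_kernel_nonneg (a b : ℝ) {c : ℝ} (hc0 : 0 ≤ c) (hc1 : c ≤ 1) :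
    0 ≤ ∫ x in (0:ℝ)..c, x ^ (a - 1) * (1 - x) ^ (b - 1) :=
  intervalIntegral.integral_nonneg hc0 fun x hx =>
    mul_nonneg (Real.rpow_nonneg hx.1 _) (Real.rpow_nonneg (by linarith [hx.2]) _)

lemma incBeta_nonneg {ε : ℝ} (a b : ℝ) (hε0 : 0 ≤ ε) (hε1 : ε ≤ 1) : 0 ≤ incBeta ε a b :=
  div_nonneg (integral_beta_kernel_nonneg a b hε0 hε1)
    (integral_beta_kernel_nonneg a b zero_le_one le_rfl)

lemma rpow_mul_one_sub_le_mul_integral (ha : 0 < a) (m : ℕ) {ε : ℝ} (hε0 : 0 ≤ ε)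
    (hε1 : ε ≤ 1) :
    ε ^ a * (1 - a * m * ε / (a + 1)) ≤
      a * ∫ x in (0:ℝ)..ε, x ^ (a - 1) * (1 - x) ^ m := by
  have hi1 : IntervalIntegrable (fun x : ℝ => x ^ (a - 1)) volume 0 ε :=
    intervalIntegral.intervalIntegrable_rpow' (by linarith)
  have hi2 : IntervalIntegrable (fun x : ℝ => (m : ℝ) * x ^ a) volume 0 ε :=
    (intervalIntegral.intervalIntegrable_rpow' (by linarith)).const_mul _
  have hbernoulli : ∫ x in (0:ℝ)..ε, (x ^ (a - 1) - m * x ^ a) ≤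
      ∫ x in (0:ℝ)..ε, x ^ (a - 1) * (1 - x) ^ m := by
    refine intervalIntegral.integral_mono_on hε0 (hi1.sub hi2)
      (intervalIntegrable_rpow_sub_one_mul_one_sub_pow ha m ε) fun x hx => ?_
    have h := one_add_mul_le_pow (show -2 ≤ -x by linarith [hx.2]) m
    have hxa : x ^ a = x ^ (a - 1) * x := by
      simpa using Real.rpow_add_one' hx.1 (show a - 1 + 1 ≠ 0 by simpa using ha.ne')
    calc x ^ (a - 1) - m * x ^ a = x ^ (a - 1) * (1 + m * -x) := by rw [hxa]; ring
      _ ≤ x ^ (a - 1) * (1 - x) ^ m := by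
          rw [← sub_eq_add_neg] at h
          exact mul_le_mul_of_nonneg_left h (Real.rpow_nonneg hx.1 _)
  have hcompute : ∫ x in (0:ℝ)..ε, (x ^ (a - 1) - m * x ^ a) =
      ε ^ a / a - m * (ε ^ a * ε / (a + 1)) := by
    rw [intervalIntegral.integral_sub hi1 hi2, intervalIntegral.integral_const_mul,
      integral_rpow (Or.inl (by linarith)), integral_rpow (Or.inl (by linarith)),
      sub_add_cancel, Real.zero_rpow ha.ne', Real.zero_rpow (by linarith),
      Real.rpow_add_one' hε0 (by linarith)]
    ring
  calc ε ^ a * (1 - a * m * ε / (a + 1))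
      = a * (ε ^ a / a - m * (ε ^ a * ε / (a + 1))) := by field_simp
    _ ≤ a * ∫ x in (0:ℝ)..ε, x ^ (a - 1) * (1 - x) ^ m := by
      rw [← hcompute]
      exact mul_le_mul_of_nonneg_left hbernoulli ha.le

lemma one_sub_div_le_incBeta_div_rpow (ha : 0 < a) (m : ℕ) {ε : ℝ} (hε0 : 0 < ε)
    (hε1 : ε ≤ 1) :
    (1 - a * m * ε / (a + 1)) / (a * betaFun a ((m : ℝ) + 1)) ≤
      incBeta ε a ((m : ℝ) + 1) / ε ^ a := by
  have hB := betaFun_natCast_add_one_pos ha m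
  have hεa := Real.rpow_pos_of_pos hε0 a
  rw [incBeta, integral_beta_kernel_natCast_add_one, div_div, div_le_div_iff₀ (by positivity)
    (by positivity)]
  have := rpow_mul_one_sub_le_mul_integral ha m hε0.le hε1
  nlinarith

end BetaIntegral

lemma one_le_mul_one_sub_div {a ε : ℝ} (ha : 0 ≤ a) (hε : 0 ≤ ε) {m n : ℕ} (hm : m ≤ n)
    (hεn : ε * n ≤ 1) :
    1 ≤ (1 + a * n * ε / (a + 1 - a * ε * n)) * (1 - a * m * ε / (a + 1)) := by
  have hD : 0 < a + 1 - a * ε * n := by nlinarith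
  have hmn : a * ε * m ≤ a * ε * n := by gcongr
  rw [one_add_div hD.ne', one_sub_div (by linarith), div_mul_div_comm,
    one_le_div (by positivity)]
  nlinarith

lemma one_div_le_mul_incBeta_div_rpow {a ε : ℝ} (ha : 0 < a) (hε0 : 0 < ε) (hε1 : ε ≤ 1)
    {m n : ℕ} (hm : m ≤ n) (hεn : ε * n ≤ 1) :
    1 / (a * betaFun a ((m : ℝ) + 1)) ≤
      (1 + a * n * ε / (a + 1 - a * ε * n)) * (incBeta ε a ((m : ℝ) + 1) / ε ^ a) := by
  have hB := betaFun_natCast_add_one_pos ha m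
  calc 1 / (a * betaFun a ((m : ℝ) + 1))
      ≤ (1 + a * n * ε / (a + 1 - a * ε * n)) * (1 - a * m * ε / (a + 1)) /
          (a * betaFun a ((m : ℝ) + 1)) := by
        gcongr
        exact one_le_mul_one_sub_div ha.le hε0.le hm hεn
    _ ≤ _ := by
        rw [mul_div_assoc]
        refine mul_le_mul_of_nonneg_left (one_sub_div_le_incBeta_div_rpow ha m hε0 hε1) ?_
        have : 0 ≤ a * ε * n := by positivity
        have : 0 < a + 1 - a * ε * n := by nlinarith
        positivity

lemma div_add_le_div_add_mul_one_sub_pow {α p ε : ℝ} (hα : 0 ≤ α) (hp : p ≤ 1)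
    (hε0 : 0 ≤ ε) (hε1 : ε ≤ 1) {g : ℕ} (hg : 0 < g) {x y : ℝ} (hx : 0 ≤ x) (hxy : x ≤ y) :
    x / (g + α * (1 - p)) ≤ y / (g + α * (1 - p) * (1 - ε ^ g)) := by
  have hg' : (1 : ℝ) ≤ g := by exact_mod_cast hg
  have hεg : ε ^ g ≤ 1 := pow_le_one₀ hε0 hε1
  have hαp : 0 ≤ α * (1 - p) := mul_nonneg hα (by linarith)
  refine div_le_div₀ (hx.trans hxy) hxy (by nlinarith) ?_
  nlinarith [pow_nonneg hε0 g]

lemma prod_le_mul_prod {ι R : Type*} [Fintype ι] [DecidableEq ι] [CommSemiring R]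
    [PartialOrder R] [IsOrderedRing R] (i₀ : ι) {K : R} {f g : ι → R} (hf : ∀ i, 0 ≤ f i)
    (hfg : ∀ i ≠ i₀, f i ≤ g i) (hi₀ : f i₀ ≤ K * g i₀) :
    ∏ i, f i ≤ K * ∏ i, g i := by
  rw [← mul_prod_erase univ f (mem_univ i₀), ← mul_prod_erase univ g (mem_univ i₀), ← mul_assoc]
  exact mul_le_mul hi₀
    (prod_le_prod (fun i _ => hf i) fun i hi => hfg i (ne_of_mem_erase hi))
    (prod_nonneg fun i _ => hf i) ((hf i₀).trans hi₀)

lemma add_div_le_mul_add_incBeta_div_rpow {α p ε : ℝ} (hα : 0 < α) (hp0 : 0 ≤ p)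
    (hp1 : p ≤ 1) (hε0 : 0 < ε) (hε1 : ε ≤ 1) {m n : ℕ} (hm : m ≤ n) (hεn : ε * n ≤ 1) :
    p + (1 - p) / (α * betaFun α ((m : ℝ) + 1)) ≤
      (1 + α * n * ε / (α + 1 - α * ε * n)) *
        (p + (1 - p) * incBeta ε α ((m : ℝ) + 1) / ε ^ α) := by
  set K := 1 + α * n * ε / (α + 1 - α * ε * n)
  have hK : 1 ≤ K := by
    have : 0 < α + 1 - α * ε * n := by nlinarith
    exact le_add_of_nonneg_right (by positivity)
  calc p + (1 - p) / (α * betaFun α ((m : ℝ) + 1))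
      = p + (1 - p) * (1 / (α * betaFun α ((m : ℝ) + 1))) := by rw [mul_one_div]
    _ ≤ K * p + (1 - p) * (K * (incBeta ε α ((m : ℝ) + 1) / ε ^ α)) :=
        add_le_add (le_mul_of_one_le_left hp0 hK) (mul_le_mul_of_nonneg_left
          (one_div_le_mul_incBeta_div_rpow hα hε0 hε1 hm hεn) (by linarith))
    _ = K * (p + (1 - p) * incBeta ε α ((m : ℝ) + 1) / ε ^ α) := by ring

theorem eppfZero_le_mul_eppfEps {α p ε : ℝ} (hα : 0 < α) (hp0 : 0 ≤ p) (hp1 : p ≤ 1)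
    (hε0 : 0 < ε) (hε1 : ε ≤ 1) {n t : ℕ} (hεn : ε * n ≤ 1) (ht : 0 < t) (ns : Fin t → ℕ)
    (hns_pos : ∀ j, 0 < ns j) (hns_le : ∀ j, ns j ≤ n) :
    eppfZero α p n t ns ≤ (1 + α * n * ε / (α + 1 - α * ε * n)) * eppfEps α p ε n t ns := by
  obtain ⟨s, rfl⟩ := Nat.exists_eq_add_one_of_ne_zero ht.ne'
  unfold eppfZero eppfEps
  rw [mul_left_comm]
  refine mul_le_mul_of_nonneg_left ?_ (by positivity)
  rw [mul_sum]
  refine sum_le_sum fun σ _ => ?_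
  have hg : ∀ j, 0 < ∑ l ∈ Ici j, ns (σ l) := fun j =>
    (hns_pos (σ j)).trans_le
      (single_le_sum (f := fun l => ns (σ l)) (fun _ _ => Nat.zero_le _) (mem_Ici.2 le_rfl))
  have hB : ∀ j, 0 ≤ (1 - p) / (α * betaFun α (ns (σ j) + 1)) := fun j =>
    div_nonneg (by linarith) (mul_pos hα (betaFun_natCast_add_one_pos hα _)).le
  simp only [Nat.add_sub_cancel]
  refine prod_le_mul_prod (Fin.last s) (fun j => ?_) (fun j hj => ?_) ?_
  · have := hB j
    split_ifs <;> positivity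
  · have hI : 0 ≤ (1 - p) * incBeta ε ((∑ l ∈ Ioi j, ns (σ l) : ℕ) + α) (ns (σ j) + 1)
        / ε ^ α :=
      div_nonneg (mul_nonneg (by linarith) (incBeta_nonneg _ _ hε0.le hε1)) (by positivity)
    rw [if_neg (Fin.val_lt_last hj).ne, add_zero]
    exact div_add_le_div_add_mul_one_sub_pow hα.le hp1 hε0.le hε1 (hg j) hp0 (by linarith)
  · rw [if_pos (Fin.val_last s), ← Fin.top_eq_last, Ioi_top, sum_empty, Nat.cast_zero, zero_add,
      ← mul_div_assoc]
    exact div_add_le_div_add_mul_one_sub_pow hα.le hp1 hε0.le hε1 (hg _)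
      (by linarith [hB ⊤]) (add_div_le_mul_add_incBeta_div_rpow hα hp0 hp1 hε0 hε1 (hns_le _) hεn)

lemma blockEnum_mem {n : ℕ} (P : Finset (Finset (Fin n))) (j : Fin P.card) :
    blockEnum P j ∈ P :=
  Finset.coe_mem _

namespace SetPartition

variable {n : ℕ} (P : SetPartition n)

lemma card_pos (hn : 0 < n) : 0 < P.1.card := by
  obtain ⟨A, ⟨hA, -⟩, -⟩ := P.2.2 ⟨0, hn⟩
  exact Finset.card_pos.2 ⟨A, hA⟩

lemma blockSize_pos (j : Fin P.1.card) : 0 < blockSize P j :=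
  Finset.card_pos.2 <| nonempty_iff_ne_empty.2 fun h => P.2.1 (h ▸ blockEnum_mem P.1 j)

lemma blockSize_le (j : Fin P.1.card) : blockSize P j ≤ n :=
  (card_le_univ _).trans_eq (Fintype.card_fin n)

end SetPartition

theorem stmt5_general (α p : ℝ) (hα : 0 < α) (hp : p ∈ Set.Ioo (0:ℝ) 1) (n : ℕ)
    (ε : ℝ) (hε : ε ∈ Set.Ioo (0:ℝ) 1) (hεn : ε ≤ 1 / n) (P : SetPartition n) :
    PrZero α p n P ≤
      (1 + α * n * ε / (α + 1 - α * ε * n)) * PrEps α p ε n P := by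
  obtain ⟨hp0, hp1⟩ := hp
  obtain ⟨hε0, hε1⟩ := hε
  have hn : 0 < n := Nat.pos_of_ne_zero fun h => by
    rw [h, Nat.cast_zero, div_zero] at hεn
    linarith
  have hεn' : ε * n ≤ 1 := (le_div_iff₀ (by positivity)).1 hεn
  exact eppfZero_le_mul_eppfEps hα hp0.le hp1.le hε0 hε1.le hεn' (P.card_pos hn) (blockSize P)
    P.blockSize_pos P.blockSize_le

/-- Lower ratio bound between the quasi-Bernoulli partition distributions:
for `ε ≤ 1/n`, `Pr_{0,n}(𝒜) ≤ (1 + αnε/(α+1-αεn)) Pr_{ε,n}(𝒜)` for every set partition `𝒜`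
of `{1,…,n}`. -/
theorem stmt5 (α p : ℝ) (hα : 0 < α) (hp : p ∈ Set.Ioo (0:ℝ) 1) (n : ℕ) (hn : 1 ≤ n)
    (ε : ℝ) (hε : ε ∈ Set.Ioo (0:ℝ) 1) (hεn : ε ≤ 1 / n) (P : SetPartition n) :
    PrZero α p n P ≤
      (1 + α * n * ε / (α + 1 - α * ε * n)) * PrEps α p ε n P :=
  stmt5_general α p hα hp n ε hε hεn P
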